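/- There exists a universal constant c > 0 with the following property. For all dimensions d_x, d_y, all μ > 0 and L₀, L₁, L₂ > 0 with μ ≤ L₁, and all functions f, g : ℝ^{d_x} × ℝ^{d_y} → ℝ such that: f is L₀-Lipschitz in y; ∇f and ∇g are L₁-Lipschitz jointly in (x, y); ∇²_{xy} g and ∇²_{yy} g are L₂-Lipschitz jointly in (x, y); and g is μ-strongly convex in y with unique minimizer y*(x) := argmin_y g(x, y) attained for every x — the hyper-objective φ(x) := f(x, y*(x)) is differentiable and ∇φ is (c · L̄ · κ³)-Lipschitz, where L̄ = max{L₀, L₁, L₂} and κ = L̄/μ. -/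

import Mathlib

/-!
The minimizer `y*(x)` is the zero of `y ↦ ∇_y g(x, y)`, which is `μ`-strongly monotone and
`L₁`-Lipschitz in `x`; hence `y*` is `(L₁/μ)`-Lipschitz. Strong monotonicity also gives
`∇²_yy g ≥ μ`, so this block is invertible with inverse of norm at most `1/μ`, and the Lipschitz
bound on `y*` is enough to differentiate the identity `∇_y g(x, y*(x)) = 0`:
`Dy* = -[∇²_yy g]⁻¹ ∇²_xy g`. By the chain rule `Dφ = ∂_x f + ∂_y f ∘ Dy*` along the graph
`x ↦ (x, y*(x))`, which is `(1 + L₁/μ)`-Lipschitz. Each factor is bounded (`‖∂_y f‖ ≤ L₀`,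
`‖Dy*‖ ≤ L₁/μ`, `‖∇²_xy g‖ ≤ L₁`) and Lipschitz along the graph, so the product rule for Lipschitz
constants gives the constant `(L₁ + L₀ L₂/μ)(1 + L₁/μ)² ≤ 8 L̄ κ³`.
-/

open scoped RealInnerProductSpace

/-- The joint variable (x, y) viewed as an element of ℝ^{dx} × ℝ^{dy} equipped with
the Euclidean (ℓ²) norm. -/
noncomputable def mk2 {dx dy : ℕ} (x : EuclideanSpace ℝ (Fin dx))
    (y : EuclideanSpace ℝ (Fin dy)) :
    WithLp 2 (EuclideanSpace ℝ (Fin dx) × EuclideanSpace ℝ (Fin dy)) :=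
  (WithLp.equiv 2 _).symm (x, y)

/-- The Hessian block ∇²_{yy} g(x, y) : ℝ^{dy} →L ℝ^{dy}. -/
noncomputable def Hyy {dx dy : ℕ}
    (g : WithLp 2 (EuclideanSpace ℝ (Fin dx) × EuclideanSpace ℝ (Fin dy)) → ℝ)
    (x : EuclideanSpace ℝ (Fin dx)) (y : EuclideanSpace ℝ (Fin dy)) :
    EuclideanSpace ℝ (Fin dy) →L[ℝ] EuclideanSpace ℝ (Fin dy) :=
  fderiv ℝ (fun y' => gradient (fun y'' => g (mk2 x y'')) y') y

/-- The Hessian block ∇²_{xy} g(x, y), realized as the derivative in x of the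
partial gradient ∇_y g : ℝ^{dx} →L ℝ^{dy}. -/
noncomputable def Hxy {dx dy : ℕ}
    (g : WithLp 2 (EuclideanSpace ℝ (Fin dx) × EuclideanSpace ℝ (Fin dy)) → ℝ)
    (x : EuclideanSpace ℝ (Fin dx)) (y : EuclideanSpace ℝ (Fin dy)) :
    EuclideanSpace ℝ (Fin dx) →L[ℝ] EuclideanSpace ℝ (Fin dy) :=
  fderiv ℝ (fun x' => gradient (fun y' => g (mk2 x' y')) y) x

open scoped Ring
open Filter Topology Asymptotics

section OperatorBounds

variable {E F G : Type*} [NormedAddCommGroup E] [NormedSpace ℝ E]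
  [NormedAddCommGroup F] [NormedSpace ℝ F] [NormedAddCommGroup G] [NormedSpace ℝ G]

namespace ContinuousLinearMap

theorem norm_comp_sub_comp_le (S₁ S₂ : F →L[ℝ] G) (T₁ T₂ : E →L[ℝ] F) :
    ‖S₁ ∘L T₁ - S₂ ∘L T₂‖ ≤ ‖S₁ - S₂‖ * ‖T₁‖ + ‖S₂‖ * ‖T₁ - T₂‖ := by
  have h : S₁ ∘L T₁ - S₂ ∘L T₂ = (S₁ - S₂) ∘L T₁ + S₂ ∘L (T₁ - T₂) := by
    ext; simp
  rw [h]
  exact (norm_add_le _ _).trans (add_le_add (opNorm_comp_le _ _) (opNorm_comp_le _ _))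

theorem norm_comp_add_comp_sub_le {P : Type*} [NormedAddCommGroup P] [NormedSpace ℝ P]
    (S₁ S₂ : P →L[ℝ] G) (I : E →L[ℝ] P) (J : F →L[ℝ] P) (T₁ T₂ : E →L[ℝ] F) :
    ‖(S₁ ∘L I + (S₁ ∘L J) ∘L T₁) - (S₂ ∘L I + (S₂ ∘L J) ∘L T₂)‖
      ≤ ‖S₁ - S₂‖ * (‖I‖ + ‖J‖ * ‖T₁‖) + ‖S₂ ∘L J‖ * ‖T₁ - T₂‖ := by
  have h : (S₁ ∘L I + (S₁ ∘L J) ∘L T₁) - (S₂ ∘L I + (S₂ ∘L J) ∘L T₂)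
      = (S₁ - S₂) ∘L (I + J ∘L T₁) + (S₂ ∘L J) ∘L (T₁ - T₂) := by
    ext v; simp only [add_apply, sub_apply, coe_comp, Function.comp_apply, map_add, map_sub]; abel
  rw [h]
  refine norm_add_le_of_le ((opNorm_comp_le _ _).trans ?_) (opNorm_comp_le _ _)
  gcongr
  exact (norm_add_le _ _).trans (by gcongr; exact opNorm_comp_le _ _)

theorem norm_ringInverse_comp_sub_le {A₁ A₂ : F →L[ℝ] F} {H₁ H₂ : E →L[ℝ] F} {μ L : ℝ}
    (h₁ : IsUnit A₁) (h₂ : IsUnit A₂) (hA₁ : ‖A₁⁻¹ʳ‖ ≤ μ⁻¹) (hA₂ : ‖A₂⁻¹ʳ‖ ≤ μ⁻¹)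
    (hH₁ : ‖H₁‖ ≤ L) :
    ‖A₁⁻¹ʳ ∘L H₁ - A₂⁻¹ʳ ∘L H₂‖ ≤ μ⁻¹ * (μ⁻¹ * L * ‖A₁ - A₂‖ + ‖H₁ - H₂‖) := by
  have hμ : 0 ≤ μ⁻¹ := (norm_nonneg _).trans hA₁
  have hinv : ‖A₁⁻¹ʳ - A₂⁻¹ʳ‖ ≤ μ⁻¹ * ‖A₁ - A₂‖ * μ⁻¹ := by
    rw [Ring.inverse_sub_inverse (iff_of_true h₁ h₂), norm_sub_rev A₁]
    refine (norm_mul_le _ _).trans ?_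
    gcongr
    exact (norm_mul_le _ _).trans (by gcongr)
  calc ‖A₁⁻¹ʳ ∘L H₁ - A₂⁻¹ʳ ∘L H₂‖
      ≤ ‖A₁⁻¹ʳ - A₂⁻¹ʳ‖ * ‖H₁‖ + ‖A₂⁻¹ʳ‖ * ‖H₁ - H₂‖ := norm_comp_sub_comp_le _ _ _ _
    _ ≤ μ⁻¹ * ‖A₁ - A₂‖ * μ⁻¹ * L + μ⁻¹ * ‖H₁ - H₂‖ := by gcongr
    _ = μ⁻¹ * (μ⁻¹ * L * ‖A₁ - A₂‖ + ‖H₁ - H₂‖) := by ring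

end ContinuousLinearMap

end OperatorBounds

section StrongMonotonicity

variable {F : Type*} [NormedAddCommGroup F] [InnerProductSpace ℝ F]

def IsStronglyMonotone (μ : ℝ) (G : F → F) : Prop :=
  ∀ y₁ y₂, μ * ‖y₁ - y₂‖ ^ 2 ≤ ⟪G y₁ - G y₂, y₁ - y₂⟫

theorem isStronglyMonotone_of_strongConvex {φ : F → ℝ} {G : F → F} {μ : ℝ}
    (h : ∀ y₁ y₂, φ y₂ ≥ φ y₁ + ⟪G y₁, y₂ - y₁⟫ + μ / 2 * ‖y₁ - y₂‖ ^ 2) :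
    IsStronglyMonotone μ G := by
  intro y₁ y₂
  have h₁₂ := h y₁ y₂
  have h₂₁ := h y₂ y₁
  rw [norm_sub_rev y₂] at h₂₁
  rw [← neg_sub y₁ y₂, inner_neg_right] at h₁₂
  rw [inner_sub_left]
  linarith

/-- Strong monotonicity makes `t ↦ ⟪v, G (y + t • v)⟫ - μ ‖v‖² t` monotone, so its derivative
`⟪v, G' v⟫ - μ ‖v‖²` at `0` is nonnegative. -/
theorem IsStronglyMonotone.coercive_of_hasFDerivAt {G : F → F} {G' : F →L[ℝ] F} {μ : ℝ} {y : F}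
    (hG : IsStronglyMonotone μ G) (hG' : HasFDerivAt G G' y) (v : F) :
    μ * ‖v‖ ^ 2 ≤ ⟪G' v, v⟫ := by
  have hline : HasDerivAt (fun t : ℝ => y + t • v) v 0 := by
    simpa using ((hasDerivAt_id (0 : ℝ)).smul_const v).const_add y
  have hderiv : HasDerivAt (fun t : ℝ => ⟪v, G (y + t • v)⟫ - μ * ‖v‖ ^ 2 * t)
      (⟪v, G' v⟫ - μ * ‖v‖ ^ 2) 0 := by
    have hGline := HasFDerivAt.comp_hasDerivAt (0 : ℝ) (by simpa using hG') hline
    exact ((innerSL ℝ v).hasFDerivAt.comp_hasDerivAt 0 hGline).sub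
      ((hasDerivAt_id 0).const_mul _ |>.congr_deriv (by simp))
  have hmono : Monotone (fun t : ℝ => ⟪v, G (y + t • v)⟫ - μ * ‖v‖ ^ 2 * t) := by
    intro s t hst
    rcases hst.eq_or_lt with rfl | hst
    · rfl
    have h := hG (y + t • v) (y + s • v)
    rw [add_sub_add_left_eq_sub, ← sub_smul, norm_smul, inner_smul_right, mul_pow,
      Real.norm_eq_abs, sq_abs, real_inner_comm, inner_sub_right] at h
    have h' : μ * ‖v‖ ^ 2 * (t - s) ≤ ⟪v, G (y + t • v)⟫ - ⟪v, G (y + s • v)⟫ :=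
      le_of_mul_le_mul_left (by nlinarith) (sub_pos.mpr hst)
    dsimp only
    linarith
  have := hderiv.nonneg_of_monotone hmono
  rw [real_inner_comm] at this
  linarith

theorem IsStronglyMonotone.norm_sub_le_of_apply_eq_zero {E : Type*} [NormedAddCommGroup E]
    {G : E → F → F} {y : E → F} {μ L : ℝ} (hμ : 0 < μ) (hG : ∀ x, IsStronglyMonotone μ (G x))
    (hL : ∀ x₁ x₂ y, ‖G x₁ y - G x₂ y‖ ≤ L * ‖x₁ - x₂‖) (hzero : ∀ x, G x (y x) = 0)
    (x₁ x₂ : E) : ‖y x₁ - y x₂‖ ≤ L / μ * ‖x₁ - x₂‖ := by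
  have key : μ * ‖y x₁ - y x₂‖ ^ 2 ≤ L * ‖x₁ - x₂‖ * ‖y x₁ - y x₂‖ :=
    calc μ * ‖y x₁ - y x₂‖ ^ 2 ≤ ⟪G x₁ (y x₁) - G x₁ (y x₂), y x₁ - y x₂⟫ := hG x₁ _ _
      _ = ⟪G x₂ (y x₂) - G x₁ (y x₂), y x₁ - y x₂⟫ := by rw [hzero, hzero]
      _ ≤ ‖G x₂ (y x₂) - G x₁ (y x₂)‖ * ‖y x₁ - y x₂‖ := real_inner_le_norm _ _
      _ ≤ L * ‖x₁ - x₂‖ * ‖y x₁ - y x₂‖ := by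
        gcongr; rw [norm_sub_rev x₁]; exact hL _ _ _
  have hL₀ : 0 ≤ L * ‖x₁ - x₂‖ := (norm_nonneg _).trans (hL x₁ x₂ (y x₁))
  rw [div_mul_eq_mul_div, le_div_iff₀ hμ]
  rcases (norm_nonneg (y x₁ - y x₂)).eq_or_lt with h0 | h0
  · rwa [← h0, zero_mul]
  · nlinarith

theorem ContinuousLinearMap.mul_norm_le_norm_apply_of_coercive {A : F →L[ℝ] F} {μ : ℝ}
    (hA : ∀ v, μ * ‖v‖ ^ 2 ≤ ⟪A v, v⟫) (v : F) : μ * ‖v‖ ≤ ‖A v‖ := by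
  rcases (norm_nonneg v).eq_or_lt with h0 | h0
  · rw [← h0, mul_zero]; exact norm_nonneg _
  · have := (hA v).trans (real_inner_le_norm (A v) v)
    nlinarith

theorem ContinuousLinearMap.isUnit_of_coercive [FiniteDimensional ℝ F] {A : F →L[ℝ] F} {μ : ℝ}
    (hμ : 0 < μ) (hA : ∀ v, μ * ‖v‖ ^ 2 ≤ ⟪A v, v⟫) : IsUnit A := by
  have hinj : Function.Injective A := by
    refine (injective_iff_map_eq_zero A).mpr fun v hv => norm_le_zero_iff.mp ?_
    have := A.mul_norm_le_norm_apply_of_coercive hA v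
    rw [hv, norm_zero] at this
    nlinarith [norm_nonneg v]
  exact A.isUnit_iff_bijective.mpr ⟨hinj, LinearMap.injective_iff_surjective.mp hinj⟩

theorem ContinuousLinearMap.norm_ringInverse_le_of_coercive {A : F →L[ℝ] F} {μ : ℝ}
    (hμ : 0 < μ) (hA : ∀ v, μ * ‖v‖ ^ 2 ≤ ⟪A v, v⟫) (hunit : IsUnit A) : ‖A⁻¹ʳ‖ ≤ μ⁻¹ := by
  refine opNorm_le_bound _ (inv_nonneg.mpr hμ.le) fun w => ?_
  have h := A.mul_norm_le_norm_apply_of_coercive hA (A⁻¹ʳ w)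
  rw [show A (A⁻¹ʳ w) = w from DFunLike.congr_fun (Ring.mul_inverse_cancel A hunit) w] at h
  rw [inv_mul_eq_div, le_div_iff₀ hμ]
  linarith

end StrongMonotonicity

section ImplicitDerivative

variable {E F : Type*} [NormedAddCommGroup E] [NormedSpace ℝ E]
  [NormedAddCommGroup F] [NormedSpace ℝ F]

/-- Instead of the implicit function theorem, a Lipschitz-type bound on `y` at `x` suffices: it
makes the first-order remainder of `uncurry G` along the graph of `y` an `o(‖x' - x‖)`, and
`(∂_y G)⁻¹` converts that remainder into the remainder of `y`. -/
theorem hasFDerivAt_of_apply_eq_zero {G : E → F → F} {y : E → F} {x : E}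
    (hG : DifferentiableAt ℝ (Function.uncurry G) (x, y x)) (hzero : ∀ x', G x' (y x') = 0)
    (hy : (fun x' => y x' - y x) =O[𝓝 x] fun x' => x' - x)
    (hunit : IsUnit (fderiv ℝ (G x) (y x))) :
    HasFDerivAt y (-((fderiv ℝ (G x) (y x))⁻¹ʳ ∘L fderiv ℝ (fun x' => G x' (y x)) x)) x := by
  obtain ⟨D, hD⟩ := hG
  have hDx : fderiv ℝ (fun x' => G x' (y x)) x = D ∘L .inl ℝ E F :=
    (hD.comp x (hasFDerivAt_prodMk_left (𝕜 := ℝ) x (y x)) :).fderiv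
  have hDy : fderiv ℝ (G x) (y x) = D ∘L .inr ℝ E F :=
    (hD.comp (y x) (hasFDerivAt_prodMk_right (𝕜 := ℝ) x (y x)) :).fderiv
  set B := (fderiv ℝ (G x) (y x))⁻¹ʳ
  have hB : ∀ v, B (D (0, v)) = v := fun v => by
    rw [show D (0, v) = fderiv ℝ (G x) (y x) v by rw [hDy]; rfl]
    exact DFunLike.congr_fun (Ring.inverse_mul_cancel _ hunit) v
  have hgraph : (fun x' => (x', y x') - (x, y x)) =O[𝓝 x] fun x' => x' - x :=
    (isBigO_refl _ _).prod_left hy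
  have hlim : Tendsto (fun x' => (x', y x')) (𝓝 x) (𝓝 (x, y x)) :=
    tendsto_sub_nhds_zero_iff.mp (hgraph.trans_tendsto (tendsto_sub_nhds_zero_iff.mpr tendsto_id))
  have hrem := (hD.isLittleO.comp_tendsto hlim).trans_isBigO hgraph
  refine HasFDerivAt.of_isLittleO (((B.isBigO_comp _ _).trans_isLittleO hrem).neg_left.congr_left
    fun x' => ?_)
  have hsplit : D (x' - x, y x' - y x) = D (x' - x, 0) + D (0, y x' - y x) := by
    rw [← map_add, Prod.mk_add_mk, add_zero, zero_add]
  simp only [Function.comp_apply, Function.uncurry_apply_pair, hzero, Prod.mk_sub_mk, sub_self,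
    zero_sub, map_neg, neg_neg, hsplit, map_add, hB, hDx, neg_apply,
    ContinuousLinearMap.comp_apply, ContinuousLinearMap.inl_apply]
  abel

end ImplicitDerivative

namespace WithLp

variable (E F : Type*) [NormedAddCommGroup E] [NormedSpace ℝ E]
  [NormedAddCommGroup F] [NormedSpace ℝ F]

noncomputable def inlL : E →L[ℝ] WithLp 2 (E × F) :=
  (prodContinuousLinearEquiv 2 ℝ E F).symm.toContinuousLinearMap ∘L .inl ℝ E F

noncomputable def inrL : F →L[ℝ] WithLp 2 (E × F) :=
  (prodContinuousLinearEquiv 2 ℝ E F).symm.toContinuousLinearMap ∘L .inr ℝ E F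

variable {E F}

@[simp] theorem inlL_apply (x : E) : inlL E F x = toLp 2 (x, 0) := rfl

@[simp] theorem inrL_apply (y : F) : inrL E F y = toLp 2 (0, y) := rfl

theorem norm_inlL_le : ‖inlL E F‖ ≤ 1 :=
  ContinuousLinearMap.opNorm_le_bound _ zero_le_one fun x => by simp [norm_toLp_fst]

theorem norm_inrL_le : ‖inrL E F‖ ≤ 1 :=
  ContinuousLinearMap.opNorm_le_bound _ zero_le_one fun y => by simp [norm_toLp_snd]

theorem toLp_eq_inlL_add_inrL (x : E) (y : F) : toLp 2 (x, y) = inlL E F x + inrL E F y := by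
  rw [inlL_apply, inrL_apply, ← toLp_add, Prod.mk_add_mk, add_zero, zero_add]

theorem norm_toLp_le_add (x : E) (y : F) : ‖toLp 2 (x, y)‖ ≤ ‖x‖ + ‖y‖ := by
  rw [toLp_eq_inlL_add_inrL]
  exact (norm_add_le _ _).trans_eq (by rw [inlL_apply, inrL_apply, norm_toLp_fst, norm_toLp_snd])

theorem norm_toLp_graph_sub_le {y : E → F} {K : ℝ}
    (hy : ∀ x₁ x₂, ‖y x₁ - y x₂‖ ≤ K * ‖x₁ - x₂‖) (x₁ x₂ : E) :
    ‖toLp 2 (x₁, y x₁) - toLp 2 (x₂, y x₂)‖ ≤ (1 + K) * ‖x₁ - x₂‖ := by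
  rw [← toLp_sub, Prod.mk_sub_mk]
  linarith [norm_toLp_le_add (x₁ - x₂) (y x₁ - y x₂), hy x₁ x₂]

theorem _root_.HasFDerivAt.toLp_prodMk {G : Type*} [NormedAddCommGroup G] [NormedSpace ℝ G]
    {a : G → E} {b : G → F} {A : G →L[ℝ] E} {B : G →L[ℝ] F} {t : G}
    (ha : HasFDerivAt a A t) (hb : HasFDerivAt b B t) :
    HasFDerivAt (fun t => toLp 2 (a t, b t)) (inlL E F ∘L A + inrL E F ∘L B) t := by
  refine ((prodContinuousLinearEquiv 2 ℝ E F).symm.hasFDerivAt.comp t (ha.prodMk hb) :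
    HasFDerivAt (fun t => toLp 2 (a t, b t)) _ t).congr_fderiv (ContinuousLinearMap.ext fun v => ?_)
  exact toLp_eq_inlL_add_inrL (A v) (B v)

theorem hasFDerivAt_toLp_right (x : E) (y : F) :
    HasFDerivAt (fun y' => toLp 2 (x, y')) (inrL E F) y := by
  simpa using (hasFDerivAt_const x y).toLp_prodMk (hasFDerivAt_id y)

end WithLp

section Gradient

variable {E : Type*} [NormedAddCommGroup E] [InnerProductSpace ℝ E] [CompleteSpace E]

theorem norm_gradient_sub_gradient (f : E → ℝ) (p q : E) :
    ‖gradient f p - gradient f q‖ = ‖fderiv ℝ f p - fderiv ℝ f q‖ := by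
  rw [gradient, gradient, ← map_sub, LinearIsometryEquiv.norm_map]

theorem IsLocalMin.gradient_eq_zero {f : E → ℝ} {a : E} (h : IsLocalMin f a) :
    gradient f a = 0 := by
  rw [gradient, h.fderiv_eq_zero, map_zero]

theorem ContDiff.differentiable_gradient {f : E → ℝ} (hf : ContDiff ℝ 2 f) :
    Differentiable ℝ (gradient f) :=
  (InnerProductSpace.toDual ℝ E).symm.differentiable.comp
    ((hf.fderiv_right (m := 1) (by norm_num)).differentiable (by norm_num))

variable {F : Type*} [NormedAddCommGroup F] [InnerProductSpace ℝ F] [CompleteSpace F]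

theorem gradient_comp_toLp_right {g : WithLp 2 (E × F) → ℝ} {x : E} {y : F}
    (hg : DifferentiableAt ℝ g (WithLp.toLp 2 (x, y))) :
    gradient (fun y' => g (WithLp.toLp 2 (x, y'))) y = (gradient g (WithLp.toLp 2 (x, y))).snd := by
  have hpartial : HasFDerivAt (fun y' => g (WithLp.toLp 2 (x, y')))
      (fderiv ℝ g (WithLp.toLp 2 (x, y)) ∘L WithLp.inrL E F) y :=
    hg.hasFDerivAt.comp y (WithLp.hasFDerivAt_toLp_right x y)
  refine ext_inner_right ℝ fun v => ?_
  rw [inner_gradient_left, hpartial.fderiv]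
  simp [← inner_gradient_left]

end Gradient

section GraphDerivative

variable {E F : Type*} [NormedAddCommGroup E] [NormedSpace ℝ E]
  [NormedAddCommGroup F] [NormedSpace ℝ F] {f : WithLp 2 (E × F) → ℝ} {L₀ : ℝ}

noncomputable def graphDeriv (f : WithLp 2 (E × F) → ℝ) (y : E → F) (T : E → E →L[ℝ] F) (x : E) :
    E →L[ℝ] ℝ :=
  fderiv ℝ f (WithLp.toLp 2 (x, y x)) ∘L WithLp.inlL E F
    + (fderiv ℝ f (WithLp.toLp 2 (x, y x)) ∘L WithLp.inrL E F) ∘L T x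

theorem hasFDerivAt_comp_graph {y : E → F} {T : E → E →L[ℝ] F} {x : E}
    (hf : DifferentiableAt ℝ f (WithLp.toLp 2 (x, y x))) (hy : HasFDerivAt y (T x) x) :
    HasFDerivAt (fun x => f (WithLp.toLp 2 (x, y x))) (graphDeriv f y T x) x := by
  refine (hf.hasFDerivAt.comp x ((hasFDerivAt_id x).toLp_prodMk hy) :).congr_fderiv ?_
  rw [graphDeriv, ContinuousLinearMap.comp_add, ContinuousLinearMap.comp_id,
    ContinuousLinearMap.comp_assoc]

theorem norm_fderiv_comp_inrL_le {x : E} {y : F} (hf : DifferentiableAt ℝ f (WithLp.toLp 2 (x, y)))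
    (hL₀ : 0 ≤ L₀)
    (hf₀ : ∀ y₁ y₂, |f (WithLp.toLp 2 (x, y₁)) - f (WithLp.toLp 2 (x, y₂))| ≤ L₀ * ‖y₁ - y₂‖) :
    ‖fderiv ℝ f (WithLp.toLp 2 (x, y)) ∘L WithLp.inrL E F‖ ≤ L₀ :=
  (hf.hasFDerivAt.comp y (WithLp.hasFDerivAt_toLp_right x y)).le_of_lip' hL₀
    (Eventually.of_forall fun y' => hf₀ y' y)

end GraphDerivative

section Bilevel

variable {E F : Type*} [NormedAddCommGroup E] [InnerProductSpace ℝ E] [CompleteSpace E]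
  [NormedAddCommGroup F] [InnerProductSpace ℝ F] [CompleteSpace F]

noncomputable def gradY (g : WithLp 2 (E × F) → ℝ) (x : E) (y : F) : F :=
  gradient (fun y' => g (WithLp.toLp 2 (x, y'))) y

noncomputable def solutionDeriv (g : WithLp 2 (E × F) → ℝ) (ystar : E → F) (x : E) :
    E →L[ℝ] F :=
  -((fderiv ℝ (gradY g x) (ystar x))⁻¹ʳ ∘L fderiv ℝ (gradY g · (ystar x)) x)

variable {f g : WithLp 2 (E × F) → ℝ} {ystar : E → F} {μ L₀ L₁ L₂ : ℝ}

theorem gradY_eq_snd_gradient (hg : Differentiable ℝ g) (x : E) (y : F) :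
    gradY g x y = (gradient g (WithLp.toLp 2 (x, y))).snd :=
  gradient_comp_toLp_right (hg _)

theorem differentiable_uncurry_gradY (hg : ContDiff ℝ 2 g) :
    Differentiable ℝ (Function.uncurry (gradY g)) := by
  have h : Function.uncurry (gradY g)
      = WithLp.sndL 2 ℝ E F ∘ gradient g ∘ (WithLp.prodContinuousLinearEquiv 2 ℝ E F).symm :=
    funext fun p => gradY_eq_snd_gradient (hg.differentiable (by norm_num)) p.1 p.2
  rw [h]
  exact (WithLp.sndL 2 ℝ E F).differentiable.comp
    (hg.differentiable_gradient.comp (WithLp.prodContinuousLinearEquiv 2 ℝ E F).symm.differentiable)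

theorem norm_gradY_sub_le (hg : Differentiable ℝ g)
    (hg₁ : ∀ p q, ‖gradient g p - gradient g q‖ ≤ L₁ * ‖p - q‖) (x₁ x₂ : E) (y : F) :
    ‖gradY g x₁ y - gradY g x₂ y‖ ≤ L₁ * ‖x₁ - x₂‖ := by
  rw [gradY_eq_snd_gradient hg, gradY_eq_snd_gradient hg, ← WithLp.sub_snd]
  refine (WithLp.norm_snd_le _ _).trans ((hg₁ _ _).trans_eq ?_)
  rw [← WithLp.toLp_sub, Prod.mk_sub_mk, sub_self, WithLp.norm_toLp_fst]

theorem norm_fderiv_gradY_left_le (hg : Differentiable ℝ g) (hL₁ : 0 ≤ L₁)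
    (hg₁ : ∀ p q, ‖gradient g p - gradient g q‖ ≤ L₁ * ‖p - q‖) (x : E) (y : F) :
    ‖fderiv ℝ (gradY g · y) x‖ ≤ L₁ :=
  norm_fderiv_le_of_lip' ℝ hL₁ (Eventually.of_forall fun x' => norm_gradY_sub_le hg hg₁ x' x y)

theorem coercive_fderiv_gradY_right (hg : ContDiff ℝ 2 g)
    (hmono : ∀ x, IsStronglyMonotone μ (gradY g x)) (x : E) (y v : F) :
    μ * ‖v‖ ^ 2 ≤ ⟪fderiv ℝ (gradY g x) y v, v⟫ :=
  (hmono x).coercive_of_hasFDerivAt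
    ((differentiable_uncurry_gradY hg (x, y)).comp y
      ((differentiableAt_const x).prodMk differentiableAt_id)).hasFDerivAt v

theorem norm_ystar_sub_le (hg : Differentiable ℝ g) (hμ : 0 < μ)
    (hg₁ : ∀ p q, ‖gradient g p - gradient g q‖ ≤ L₁ * ‖p - q‖)
    (hmono : ∀ x, IsStronglyMonotone μ (gradY g x))
    (hzero : ∀ x, gradY g x (ystar x) = 0) (x₁ x₂ : E) :
    ‖ystar x₁ - ystar x₂‖ ≤ L₁ / μ * ‖x₁ - x₂‖ :=
  IsStronglyMonotone.norm_sub_le_of_apply_eq_zero hμ hmono (norm_gradY_sub_le hg hg₁) hzero x₁ x₂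

theorem hasFDerivAt_solution [FiniteDimensional ℝ F] (hg : ContDiff ℝ 2 g) (hμ : 0 < μ)
    (hmono : ∀ x, IsStronglyMonotone μ (gradY g x))
    (hzero : ∀ x, gradY g x (ystar x) = 0) {K : ℝ}
    (hys : ∀ x₁ x₂, ‖ystar x₁ - ystar x₂‖ ≤ K * ‖x₁ - x₂‖) (x : E) :
    HasFDerivAt ystar (solutionDeriv g ystar x) x :=
  hasFDerivAt_of_apply_eq_zero (differentiable_uncurry_gradY hg _) hzero
    (IsBigO.of_bound K (Eventually.of_forall fun x' => by
      simpa only [Real.norm_eq_abs, abs_of_nonneg (norm_nonneg _)] using hys x' x))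
    (ContinuousLinearMap.isUnit_of_coercive hμ (coercive_fderiv_gradY_right hg hmono x (ystar x)))

theorem norm_solutionDeriv_sub_le [FiniteDimensional ℝ F] (hg : ContDiff ℝ 2 g) (hμ : 0 < μ)
    (hL₁ : 0 ≤ L₁) (hL₂ : 0 ≤ L₂)
    (hg₁ : ∀ p q, ‖gradient g p - gradient g q‖ ≤ L₁ * ‖p - q‖)
    (hmono : ∀ x, IsStronglyMonotone μ (gradY g x))
    (hxy : ∀ x y x' y', ‖fderiv ℝ (gradY g · y) x - fderiv ℝ (gradY g · y') x'‖
      ≤ L₂ * ‖WithLp.toLp 2 (x, y) - WithLp.toLp 2 (x', y')‖)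
    (hyy : ∀ x y x' y', ‖fderiv ℝ (gradY g x) y - fderiv ℝ (gradY g x') y'‖
      ≤ L₂ * ‖WithLp.toLp 2 (x, y) - WithLp.toLp 2 (x', y')‖)
    (hys : ∀ x₁ x₂, ‖ystar x₁ - ystar x₂‖ ≤ L₁ / μ * ‖x₁ - x₂‖) (x₁ x₂ : E) :
    ‖solutionDeriv g ystar x₁ - solutionDeriv g ystar x₂‖
      ≤ L₂ / μ * (1 + L₁ / μ) ^ 2 * ‖x₁ - x₂‖ := by
  have hunit := fun x => ContinuousLinearMap.isUnit_of_coercive hμ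
    (coercive_fderiv_gradY_right hg hmono x (ystar x))
  have hinv := fun x => ContinuousLinearMap.norm_ringInverse_le_of_coercive hμ
    (coercive_fderiv_gradY_right hg hmono x (ystar x)) (hunit x)
  have hpath := WithLp.norm_toLp_graph_sub_le hys x₁ x₂
  rw [solutionDeriv, solutionDeriv, neg_sub_neg, norm_sub_rev]
  refine (ContinuousLinearMap.norm_ringInverse_comp_sub_le (hunit x₁) (hunit x₂) (hinv x₁)
    (hinv x₂) (norm_fderiv_gradY_left_le (hg.differentiable (by norm_num)) hL₁ hg₁ _ _)).trans ?_
  calc μ⁻¹ * (μ⁻¹ * L₁ * ‖fderiv ℝ (gradY g x₁) (ystar x₁) - fderiv ℝ (gradY g x₂) (ystar x₂)‖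
        + ‖fderiv ℝ (gradY g · (ystar x₁)) x₁ - fderiv ℝ (gradY g · (ystar x₂)) x₂‖)
      ≤ μ⁻¹ * (μ⁻¹ * L₁ * (L₂ * ((1 + L₁ / μ) * ‖x₁ - x₂‖))
        + L₂ * ((1 + L₁ / μ) * ‖x₁ - x₂‖)) := by
        gcongr
        · exact (hyy _ _ _ _).trans (by gcongr)
        · exact (hxy _ _ _ _).trans (by gcongr)
    _ = L₂ / μ * (1 + L₁ / μ) ^ 2 * ‖x₁ - x₂‖ := by ring

theorem norm_graphDeriv_sub_le {y : E → F} {T : E → E →L[ℝ] F} {K M : ℝ}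
    (hf : Differentiable ℝ f) (hL₀ : 0 ≤ L₀) (hL₁ : 0 ≤ L₁)
    (hf₀ : ∀ x y₁ y₂, |f (WithLp.toLp 2 (x, y₁)) - f (WithLp.toLp 2 (x, y₂))| ≤ L₀ * ‖y₁ - y₂‖)
    (hf₁ : ∀ p q, ‖gradient f p - gradient f q‖ ≤ L₁ * ‖p - q‖)
    (hy : ∀ x₁ x₂, ‖y x₁ - y x₂‖ ≤ K * ‖x₁ - x₂‖) (hT : ∀ x, ‖T x‖ ≤ K)
    (hT' : ∀ x₁ x₂, ‖T x₁ - T x₂‖ ≤ M * ‖x₁ - x₂‖) (x₁ x₂ : E) :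
    ‖graphDeriv f y T x₁ - graphDeriv f y T x₂‖ ≤ (L₁ * (1 + K) ^ 2 + L₀ * M) * ‖x₁ - x₂‖ := by
  have hD : ‖fderiv ℝ f (WithLp.toLp 2 (x₁, y x₁)) - fderiv ℝ f (WithLp.toLp 2 (x₂, y x₂))‖
      ≤ L₁ * ((1 + K) * ‖x₁ - x₂‖) := by
    rw [← norm_gradient_sub_gradient]
    exact (hf₁ _ _).trans (by gcongr; exact WithLp.norm_toLp_graph_sub_le hy x₁ x₂)
  have hJ : ‖WithLp.inlL E F‖ + ‖WithLp.inrL E F‖ * ‖T x₁‖ ≤ 1 + K := by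
    gcongr
    · exact WithLp.norm_inlL_le
    · exact mul_le_of_le_one_left (norm_nonneg _) WithLp.norm_inrL_le |>.trans (hT x₁)
  have hK : 0 ≤ K := (norm_nonneg _).trans (hT x₁)
  calc ‖graphDeriv f y T x₁ - graphDeriv f y T x₂‖
      ≤ L₁ * ((1 + K) * ‖x₁ - x₂‖) * (1 + K) + L₀ * (M * ‖x₁ - x₂‖) := by
        refine (ContinuousLinearMap.norm_comp_add_comp_sub_le _ _ _ _ _ _).trans
          (add_le_add (mul_le_mul hD hJ (by positivity) (by positivity))
            (mul_le_mul (norm_fderiv_comp_inrL_le (hf _) hL₀ (hf₀ x₂)) (hT' x₁ x₂)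
              (norm_nonneg _) hL₀))
    _ = (L₁ * (1 + K) ^ 2 + L₀ * M) * ‖x₁ - x₂‖ := by ring

end Bilevel

theorem hypergradient_lipschitz_constant_le {μ L₀ L₁ L₂ L : ℝ} (hμ : 0 < μ) (hL₀ : 0 ≤ L₀)
    (hμL₁ : μ ≤ L₁) (h₀ : L₀ ≤ L) (h₁ : L₁ ≤ L) (h₂ : L₂ ≤ L) :
    L₁ * (1 + L₁ / μ) ^ 2 + L₀ * (L₂ / μ * (1 + L₁ / μ) ^ 2) ≤ 8 * L * (L / μ) ^ 3 := by
  have hκ : 1 ≤ L / μ := (one_le_div hμ).mpr (hμL₁.trans h₁)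
  have hL : 0 ≤ L := hμ.le.trans (hμL₁.trans h₁)
  have hfactor : 1 + L₁ / μ ≤ 2 * (L / μ) := by
    linarith [div_le_div_of_nonneg_right h₁ hμ.le]
  have hcoeff : L₁ + L₀ * (L₂ / μ) ≤ 2 * L * (L / μ) := by
    have : L₀ * (L₂ / μ) ≤ L * (L / μ) :=
      (mul_le_mul_of_nonneg_left (div_le_div_of_nonneg_right h₂ hμ.le) hL₀).trans
        (mul_le_mul_of_nonneg_right h₀ (by positivity))
    nlinarith
  calc L₁ * (1 + L₁ / μ) ^ 2 + L₀ * (L₂ / μ * (1 + L₁ / μ) ^ 2)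
      = (L₁ + L₀ * (L₂ / μ)) * (1 + L₁ / μ) ^ 2 := by ring
    _ ≤ 2 * L * (L / μ) * (2 * (L / μ)) ^ 2 := by
      gcongr
      linarith [div_nonneg (hμ.le.trans hμL₁) hμ.le]
    _ = 8 * L * (L / μ) ^ 3 := by ring

/-- the hyper-objective φ(x) = f(x, y*(x)) has a (c·L̄·κ³)-Lipschitz
gradient for a universal constant c. -/
theorem stmt_15 :
    ∃ c : ℝ, 0 < c ∧
      ∀ (dx dy : ℕ) (μ L₀ L₁ L₂ : ℝ), 0 < μ → 0 < L₀ → 0 < L₁ → 0 < L₂ → μ ≤ L₁ →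
      ∀ (f g : WithLp 2 (EuclideanSpace ℝ (Fin dx) × EuclideanSpace ℝ (Fin dy)) → ℝ),
        Differentiable ℝ f → ContDiff ℝ 2 g →
        (∀ x y₁ y₂, |f (mk2 x y₁) - f (mk2 x y₂)| ≤ L₀ * ‖y₁ - y₂‖) →
        (∀ p q, ‖gradient f p - gradient f q‖ ≤ L₁ * ‖p - q‖) →
        (∀ p q, ‖gradient g p - gradient g q‖ ≤ L₁ * ‖p - q‖) →
        (∀ x y x' y', ‖Hxy g x y - Hxy g x' y'‖ ≤ L₂ * ‖mk2 x y - mk2 x' y'‖) →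
        (∀ x y x' y', ‖Hyy g x y - Hyy g x' y'‖ ≤ L₂ * ‖mk2 x y - mk2 x' y'‖) →
        (∀ x y₁ y₂, g (mk2 x y₂) ≥ g (mk2 x y₁)
            + ⟪gradient (fun y => g (mk2 x y)) y₁, y₂ - y₁⟫ + μ / 2 * ‖y₁ - y₂‖ ^ 2) →
        ∀ ystar : EuclideanSpace ℝ (Fin dx) → EuclideanSpace ℝ (Fin dy),
          (∀ x y, g (mk2 x (ystar x)) ≤ g (mk2 x y)) →
          ∀ Lbar κ : ℝ, Lbar = max L₀ (max L₁ L₂) → κ = Lbar / μ →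
            Differentiable ℝ (fun x => f (mk2 x (ystar x))) ∧
            ∀ x₁ x₂, ‖gradient (fun x => f (mk2 x (ystar x))) x₁
                - gradient (fun x => f (mk2 x (ystar x))) x₂‖
              ≤ c * Lbar * κ ^ 3 * ‖x₁ - x₂‖ := by
  refine ⟨8, by norm_num, ?_⟩
  intro dx dy μ L₀ L₁ L₂ hμ hL₀ hL₁ hL₂ hμL₁ f g hf hg hf₀ hf₁ hg₁ hxy hyy hsc ystar hmin
    Lbar κ hLbar hκ
  have hzero : ∀ x, gradY g x (ystar x) = 0 := fun x =>
    IsLocalMin.gradient_eq_zero (Eventually.of_forall (hmin x))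
  have hmono : ∀ x, IsStronglyMonotone μ (gradY g x) := fun x =>
    isStronglyMonotone_of_strongConvex (hsc x)
  have hys := norm_ystar_sub_le (hg.differentiable (by norm_num)) hμ hg₁ hmono hzero
  have hT := hasFDerivAt_solution hg hμ hmono hzero hys
  have hφ : ∀ x, HasFDerivAt (fun x => f (mk2 x (ystar x)))
      (graphDeriv f ystar (solutionDeriv g ystar) x) x := fun x =>
    hasFDerivAt_comp_graph (hf _) (hT x)
  refine ⟨fun x => (hφ x).differentiableAt, fun x₁ x₂ => ?_⟩
  rw [norm_gradient_sub_gradient, (hφ x₁).fderiv, (hφ x₂).fderiv]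
  refine (norm_graphDeriv_sub_le hf hL₀.le hL₁.le hf₀ hf₁ hys
    (fun x => (hT x).le_of_lip' (by positivity) (Eventually.of_forall fun x' => hys x' x))
    (norm_solutionDeriv_sub_le hg hμ hL₁.le hL₂.le hg₁ hmono hxy hyy hys) x₁ x₂).trans ?_
  subst hLbar hκ
  gcongr
  exact hypergradient_lipschitz_constant_le hμ hL₀.le hμL₁ (le_max_left _ _)
    ((le_max_left _ _).trans (le_max_right _ _)) ((le_max_right _ _).trans (le_max_right _ _))
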